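/- arXiv:1809.04571 — 2 statements merged into one kernel-verified Lean document; each statement's English description precedes it below -/
import Mathlib

section
/- For all integers n ≥ 1 and 0 ≤ k ≤ n, the number of n-derangements with exactly k cycles satisfies the inclusion–exclusion identity d_n^{(k)} = Σ_{j=0}^{k} (−1)^j · C(n,j) · [n−j, k−j], as an identity of integers. -/
/-!
Inclusion–exclusion over the set of fixed points. A permutation with `k` cycles that fixes a
`j`-set `S` pointwise is a permutation of the complement of `S` with `k - j` cycles, the points
of `S` being its remaining `j` one-cycles; so there are `[n - j, k - j]` of them when `j ≤ k`
and none otherwise, and the `C(n, j)` sets of size `j` all contribute equally.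
-/

/-- The number of cycles in the cycle decomposition of a permutation,
counting fixed points as cycles of length 1. -/
def cycleCount {α : Type*} [Fintype α] [DecidableEq α] (σ : Equiv.Perm α) : ℕ :=
  σ.cycleFactorsFinset.card + (Finset.univ.filter fun x => σ x = x).card

/-- `dnk n k` is the number of derangements of `n` elements with exactly `k` cycles. -/
def dnk (n k : ℕ) : ℕ :=
  (Finset.univ.filter fun σ : Equiv.Perm (Fin n) =>
    (∀ i, σ i ≠ i) ∧ cycleCount σ = k).card

/-- The unsigned Stirling number of the first kind: the number of permutations of
`n` elements with exactly `k` cycles (counting fixed points as 1-cycles). -/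
def stirling1 (n k : ℕ) : ℕ :=
  (Finset.univ.filter fun σ : Equiv.Perm (Fin n) => cycleCount σ = k).card

open Finset Equiv Equiv.Perm

section

variable {α β : Type*} [Fintype α] [DecidableEq α] [Fintype β] [DecidableEq β]

lemma cycleCount_eq_card_cycleType_add (σ : Perm α) :
    cycleCount σ = Multiset.card σ.cycleType + (Fintype.card α - σ.cycleType.sum) := by
  have hfix : #{x | σ x = x} = #σ.supportᶜ := by
    congr 1
    ext x
    simp [mem_support]
  rw [cycleCount, hfix, card_compl, sum_cycleType, cycleType_def, Multiset.card_map]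
  rfl

lemma cycleType_permCongr (e : α ≃ β) (τ : Perm α) :
    (e.permCongr τ).cycleType = τ.cycleType := by
  have hext :
      e.permCongr τ = τ.extendDomain (e.trans (subtypeUnivEquiv fun _ => trivial).symm) := by
    ext b
    rw [extendDomain_apply_subtype _ _ trivial]
    simp [subtypeUnivEquiv]
  rw [hext, cycleType_extendDomain]

lemma cycleCount_permCongr (e : α ≃ β) (τ : Perm α) :
    cycleCount (e.permCongr τ) = cycleCount τ := by
  rw [cycleCount_eq_card_cycleType_add, cycleCount_eq_card_cycleType_add, cycleType_permCongr,
    Fintype.card_congr e]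

lemma card_filter_cycleCount_eq_stirling1 (k : ℕ) :
    #{τ : Perm β | cycleCount τ = k} = stirling1 (Fintype.card β) k := by
  refine card_equiv (Fintype.equivFin β).permCongr fun τ => ?_
  simp [cycleCount_permCongr]

lemma cycleCount_ofSubtype {p : α → Prop} [DecidablePred p] (τ : Perm (Subtype p)) :
    cycleCount (ofSubtype τ) = cycleCount τ + (Fintype.card α - Fintype.card (Subtype p)) := by
  rw [cycleCount_eq_card_cycleType_add, cycleCount_eq_card_cycleType_add, cycleType_ofSubtype]
  have := τ.sum_cycleType_le
  have := Fintype.card_le_of_injective _ (Subtype.val_injective (p := p))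
  omega

lemma card_filter_fixing_eq_card_filter_ofSubtype (S : Finset α) (P : Perm α → Prop)
    [DecidablePred P] :
    #{σ : Perm α | (∀ x ∈ S, σ x = x) ∧ P σ} =
      #{τ : Perm {x // x ∉ S} | P (ofSubtype τ)} := by
  symm
  refine card_bij (fun τ _ => ofSubtype τ) ?_ (fun _ _ _ _ h => ofSubtype_injective h) ?_
  · intro τ hτ
    simp only [mem_filter, mem_univ, true_and] at hτ ⊢
    exact ⟨fun x hx => ofSubtype_apply_of_not_mem τ (not_not.2 hx), hτ⟩
  · intro σ hσ
    simp only [mem_filter, mem_univ, true_and] at hσ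
    obtain ⟨hfix, hP⟩ := hσ
    have hmoved : ∀ x, σ x ≠ x → x ∉ S := fun x hx hxS => hx (hfix x hxS)
    have hstable : ∀ x, σ x ∉ S ↔ x ∉ S := fun x => not_congr
      ⟨fun h => σ.injective (hfix _ h) ▸ h, fun h => (hfix x h).symm ▸ h⟩
    refine ⟨σ.subtypePerm hstable, ?_, ofSubtype_subtypePerm _ hmoved⟩
    simpa [ofSubtype_subtypePerm _ hmoved] using hP

lemma card_filter_fixing_cycleCount_eq (S : Finset α) (k : ℕ) :
    #{σ : Perm α | (∀ x ∈ S, σ x = x) ∧ cycleCount σ = k} =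
      if #S ≤ k then stirling1 (Fintype.card α - #S) (k - #S) else 0 := by
  have hcard : Fintype.card {x // x ∉ S} = Fintype.card α - #S := by
    rw [Fintype.card_subtype_compl, Fintype.card_coe]
  have hS : #S ≤ Fintype.card α := S.card_le_univ
  simp_rw [card_filter_fixing_eq_card_filter_ofSubtype, cycleCount_ofSubtype, hcard,
    Nat.sub_sub_self hS]
  split_ifs with hSk
  · rw [← hcard, ← card_filter_cycleCount_eq_stirling1]
    congr 1
    ext τ
    simp only [mem_filter, mem_univ, true_and]
    omega
  · rw [card_eq_zero, filter_eq_empty_iff]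
    intro τ _
    omega

lemma card_filter_derangement_eq_sum_powerset (P : Perm α → Prop) [DecidablePred P] :
    (#{σ : Perm α | (∀ x, σ x ≠ x) ∧ P σ} : ℤ) =
      ∑ t ∈ (univ : Finset α).powerset,
        (-1 : ℤ) ^ #t * #{σ : Perm α | (∀ x ∈ t, σ x = x) ∧ P σ} := by
  have hfixing (t : Finset α) : #{σ : Perm α | (∀ x ∈ t, σ x = x) ∧ P σ} =
      #{σ ∈ t.inf fun x => ({σ | σ x = x} : Finset (Perm α)) | P σ} := by
    congr 1
    ext σ
    simp [mem_inf]
  have hderangement : #{σ : Perm α | (∀ x, σ x ≠ x) ∧ P σ} =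
      #{σ ∈ univ.inf fun x => ({σ | σ x = x} : Finset (Perm α))ᶜ | P σ} := by
    congr 1
    ext σ
    simp [mem_inf]
  simp only [hderangement, hfixing]
  simpa only [sum_boole, smul_eq_mul] using inclusion_exclusion_sum_inf_compl univ
    (fun x => ({σ | σ x = x} : Finset (Perm α))) (fun σ => if P σ then (1 : ℤ) else 0)

theorem card_filter_derangement_cycleCount_eq_sum (k : ℕ) (hk : k ≤ Fintype.card α) :
    (#{σ : Perm α | (∀ x, σ x ≠ x) ∧ cycleCount σ = k} : ℤ) =
      ∑ j ∈ range (k + 1), (-1 : ℤ) ^ j * ((Fintype.card α).choose j : ℤ) *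
        (stirling1 (Fintype.card α - j) (k - j) : ℤ) := by
  set n := Fintype.card α
  let g : ℕ → ℤ := fun j =>
    (-1) ^ j * ((if j ≤ k then stirling1 (n - j) (k - j) else 0 : ℕ) : ℤ)
  have hvanish : ∀ j ∈ range (n + 1), j ∉ range (k + 1) → n.choose j • g j = 0 :=
    fun j _ hj => by simp [g, show ¬j ≤ k by simpa using hj]
  calc (#{σ : Perm α | (∀ x, σ x ≠ x) ∧ cycleCount σ = k} : ℤ)
      = ∑ t ∈ (univ : Finset α).powerset, g #t := by
        rw [card_filter_derangement_eq_sum_powerset]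
        simp_rw [card_filter_fixing_cycleCount_eq]
        rfl
    _ = ∑ j ∈ range (n + 1), n.choose j • g j := by
        rw [sum_powerset_apply_card, card_univ]
    _ = ∑ j ∈ range (k + 1), n.choose j • g j :=
        (sum_subset (range_subset_range.2 (by omega)) hvanish).symm
    _ = _ := by
        refine sum_congr rfl fun j hj => ?_
        simp only [g, nsmul_eq_mul, if_pos (Nat.lt_succ_iff.1 (mem_range.1 hj))]
        ring

end

theorem dnk_inclusion_exclusion_general (n k : ℕ) (hk : k ≤ n) :
    (dnk n k : ℤ) =
      ∑ j ∈ Finset.range (k + 1),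
        (-1 : ℤ) ^ j * (n.choose j : ℤ) * (stirling1 (n - j) (k - j) : ℤ) := by
  unfold dnk
  -- `convert` bridges the `Decidable` instances, which elaborate differently over `Fin n`.
  convert card_filter_derangement_cycleCount_eq_sum (α := Fin n) k (by simpa using hk) using 1 <;>
    simp

theorem dnk_inclusion_exclusion (n k : ℕ) (hn : 1 ≤ n) (hk : k ≤ n) :
    (dnk n k : ℤ) =
      ∑ j ∈ Finset.range (k + 1),
        (-1 : ℤ) ^ j * (n.choose j : ℤ) * (stirling1 (n - j) (k - j) : ℤ) :=
  dnk_inclusion_exclusion_general n k hk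
end

section
/- For every integer n ≥ 3, the following identity of real numbers holds: ∏_{i=1}^{n−1} (1 − 1/(n − i + (i−1)/(n−1))) = (1/(n−1)) · ∏_{i=1}^{n−1} (1 + 1/((n−2)·(n−i)))^{−1}. -/
/-!
Substitute `j = n - i` and `c = n - 2`. The factors on the left become `c j / (c j + c + 1)` and
those on the right `c j / (c j + 1)`; their quotient `(c j + 1) / (c (j + 1) + 1)` telescopes over
`j = 1, …, n - 1` to `(c + 1) / (c n + 1) = 1 / (n - 1)`.
-/

open Finset

theorem Finset.prod_Icc_one_div_succ₀ {G₀ : Type*} [CommGroupWithZero G₀] {f : ℕ → G₀}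
    (hf : ∀ i, f i ≠ 0) (m : ℕ) :
    ∏ i ∈ Icc 1 m, f i / f (i + 1) = f 1 / f (m + 1) := by
  induction m with
  | zero => simp [hf]
  | succ m ih => rw [prod_Icc_succ_top (by omega), ih, div_mul_div_cancel₀ (hf _)]

theorem Finset.prod_Icc_one_sub_reflect {M : Type*} [CommMonoid M] (f : ℕ → M) (n : ℕ) :
    ∏ i ∈ Icc 1 (n - 1), f (n - i) = ∏ i ∈ Icc 1 (n - 1), f i := by
  rcases n with _ | n
  · simp
  · simpa [Ico_add_one_right_eq_Icc] using prod_Ico_reflect f 1 (Nat.le_succ (n + 1))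

theorem prod_Icc_mul_div_mul_add_add_one (c : ℝ) (hc : 0 ≤ c) (m : ℕ) :
    ∏ j ∈ Icc 1 m, c * j / (c * j + c + 1) =
      (c + 1) / (c * (m + 1) + 1) * ∏ j ∈ Icc 1 m, c * j / (c * j + 1) := by
  have hpos (j : ℕ) : 0 < c * j + 1 := by positivity
  have hsplit (j : ℕ) : c * j / (c * j + c + 1) =
      (c * j + 1) / (c * ↑(j + 1) + 1) * (c * j / (c * j + 1)) := by
    have := hpos (j + 1)
    push_cast at this ⊢
    field_simp
  simp_rw [hsplit, prod_mul_distrib, prod_Icc_one_div_succ₀ (fun j => (hpos j).ne'), Nat.cast_one,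
    mul_one, Nat.cast_succ]

theorem one_sub_one_div_sub_sub_add_div (x j : ℝ) (hx : 2 ≤ x) (hj : 0 ≤ j) :
    1 - 1 / (x - (x - j) + (x - j - 1) / (x - 1)) =
      (x - 2) * j / ((x - 2) * j + (x - 2) + 1) := by
  have hx1 : x - 1 ≠ 0 := by linarith
  have hD : (x - 2) * j + (x - 2) + 1 ≠ 0 := by nlinarith
  have hden : x - (x - j) + (x - j - 1) / (x - 1) = ((x - 2) * j + (x - 2) + 1) / (x - 1) := by
    field_simp
    ring
  rw [hden, one_div_div, one_sub_div hD]
  ring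

theorem sis_refined_bound_identity (n : ℕ) (hn : 3 ≤ n) :
    ∏ i ∈ Finset.Icc 1 (n - 1),
        (1 - 1 / ((n : ℝ) - i + ((i : ℝ) - 1) / ((n : ℝ) - 1))) =
      (1 / ((n : ℝ) - 1)) *
        ∏ i ∈ Finset.Icc 1 (n - 1),
          (1 + 1 / (((n : ℝ) - 2) * ((n : ℝ) - i)))⁻¹ := by
  have hc : (1 : ℝ) ≤ n - 2 := by
    rw [le_sub_iff_add_le]
    exact_mod_cast hn
  have hcast {j : ℕ} (hj : j ∈ Icc 1 (n - 1)) : ((n - j : ℕ) : ℝ) = n - j :=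
    Nat.cast_sub (by grind)
  calc _ = ∏ j ∈ Icc 1 (n - 1), ((n : ℝ) - 2) * j / ((n - 2) * j + (n - 2) + 1) := by
        rw [← prod_Icc_one_sub_reflect]
        refine prod_congr rfl fun j hj => ?_
        rw [hcast hj, one_sub_one_div_sub_sub_add_div _ _ (by linarith) j.cast_nonneg]
    _ = ((n : ℝ) - 2 + 1) / ((n - 2) * (↑(n - 1) + 1) + 1) *
          ∏ j ∈ Icc 1 (n - 1), ((n : ℝ) - 2) * j / ((n - 2) * j + 1) :=
        prod_Icc_mul_div_mul_add_add_one _ (by linarith) _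
    _ = _ := by
        rw [← prod_Icc_one_sub_reflect (fun i : ℕ => (1 + 1 / (((n : ℝ) - 2) * (n - i)))⁻¹)]
        congr 1
        · have hnum : (n : ℝ) - 2 + 1 = n - 1 := by ring
          have hden : ((n : ℝ) - 2) * (↑(n - 1) + 1) + 1 = (n - 1) * (n - 1) := by
            rw [Nat.cast_pred (by omega)]
            ring
          rw [hnum, hden, div_mul_cancel_left₀ (by linarith), one_div]
        · refine prod_congr rfl fun j hj => ?_
          have hj1 : (1 : ℝ) ≤ j := by exact_mod_cast (mem_Icc.mp hj).1
          rw [hcast hj, sub_sub_cancel, one_add_div (by nlinarith), inv_div]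
end
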